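/- arXiv:2203.00614 — 4 statements merged into one kernel-verified Lean document; each statement's English description precedes it below -/
import Mathlib

section
/- Let A be a symmetric positive definite d×d real matrix (d ≥ 2) with eigenvalues a₁ ≥ a₂ ≥ ⋯ ≥ a_d. Then for any vectors w, u ∈ ℝ^d with w ⊥ u (i.e., wᵀu = 0), one has wᵀAu ≥ ((a_d − a₁)/2)·‖w‖·‖u‖. -/
open scoped Matrix
open scoped RealInnerProductSpace

lemma key_ineq {d : ℕ} (μ W U : Fin d → ℝ) (m M : ℝ) (hmM : m ≤ M)
    (hm : ∀ i, m ≤ μ i) (hM : ∀ i, μ i ≤ M)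
    (h0 : ∑ i, W i * U i = 0) :
    (m - M) / 2 * (Real.sqrt (∑ i, W i ^ 2) * Real.sqrt (∑ i, U i ^ 2))
      ≤ ∑ i, μ i * (W i * U i) := by
  set c := (M + m) / 2 with hc
  have h1 : ∑ i, μ i * (W i * U i) = ∑ i, (μ i - c) * (W i * U i) := by
    simp only [sub_mul, Finset.sum_sub_distrib]
    rw [← Finset.mul_sum, h0, mul_zero, sub_zero]
  have hnn : (0:ℝ) ≤ (M - m) / 2 := by linarith
  have h2 : ∀ i, |(μ i - c) * (W i * U i)| ≤ (M - m) / 2 * (|W i| * |U i|) := by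
    intro i
    rw [abs_mul, abs_mul]
    have h : |μ i - c| ≤ (M - m) / 2 := by
      rw [abs_le]; constructor <;> [linarith [hm i]; linarith [hM i]]
    exact mul_le_mul_of_nonneg_right h (mul_nonneg (abs_nonneg _) (abs_nonneg _))
  have h3 : ∑ i, |W i| * |U i| ≤ Real.sqrt (∑ i, W i ^ 2) * Real.sqrt (∑ i, U i ^ 2) := by
    have hcs := Finset.sum_mul_sq_le_sq_mul_sq Finset.univ (fun i => |W i|) (fun i => |U i|)
    have habsW : ∑ i, |W i| ^ 2 = ∑ i, W i ^ 2 := by simp [sq_abs]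
    have habsU : ∑ i, |U i| ^ 2 = ∑ i, U i ^ 2 := by simp [sq_abs]
    rw [habsW, habsU] at hcs
    calc ∑ i, |W i| * |U i| = Real.sqrt ((∑ i, |W i| * |U i|) ^ 2) :=
          (Real.sqrt_sq (by positivity)).symm
      _ ≤ Real.sqrt ((∑ i, W i ^ 2) * ∑ i, U i ^ 2) := Real.sqrt_le_sqrt hcs
      _ = _ := Real.sqrt_mul (by positivity) _
  have h4 : -((M - m) / 2 * ∑ i, |W i| * |U i|) ≤ ∑ i, (μ i - c) * (W i * U i) := by
    rw [Finset.mul_sum, ← Finset.sum_neg_distrib]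
    refine Finset.sum_le_sum fun i _ => ?_
    have := h2 i
    have := neg_abs_le ((μ i - c) * (W i * U i))
    linarith
  have h5 : (M - m) / 2 * ∑ i, |W i| * |U i|
      ≤ (M - m) / 2 * (Real.sqrt (∑ i, W i ^ 2) * Real.sqrt (∑ i, U i ^ 2)) :=
    mul_le_mul_of_nonneg_left h3 hnn
  rw [h1]
  have : (m - M) / 2 * (Real.sqrt (∑ i, W i ^ 2) * Real.sqrt (∑ i, U i ^ 2))
      = -((M - m) / 2 * (Real.sqrt (∑ i, W i ^ 2) * Real.sqrt (∑ i, U i ^ 2))) := by ring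
  rw [this]
  linarith

/-- For a symmetric positive definite matrix `A` with eigenvalues
`a₁ ≥ ⋯ ≥ a_d` (so `a₁` is the largest, `a_d` the smallest), and orthogonal
vectors `w ⊥ u`, one has `wᵀAu ≥ ((a_d − a₁)/2)·‖w‖·‖u‖`. -/
theorem stmt0 {d : ℕ} (hd : 2 ≤ d) (A : Matrix (Fin d) (Fin d) ℝ)
    (hpos : A.PosDef)
    (w u : EuclideanSpace ℝ (Fin d))
    (horth : ⟪w, u⟫ = 0) :
    ((Finset.univ.inf' (Finset.univ_nonempty_iff.mpr ⟨⟨0, by omega⟩⟩)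
        hpos.isHermitian.eigenvalues
      - Finset.univ.sup' (Finset.univ_nonempty_iff.mpr ⟨⟨0, by omega⟩⟩)
        hpos.isHermitian.eigenvalues) / 2) * (‖w‖ * ‖u‖)
      ≤ (w : Fin d → ℝ) ⬝ᵥ A.mulVec u := by
  have hA := hpos.isHermitian
  have hsym : ∀ x y : Fin d → ℝ, x ⬝ᵥ (A *ᵥ y) = (A *ᵥ x) ⬝ᵥ y := by
    intro x y
    rw [Matrix.dotProduct_mulVec, ← Matrix.mulVec_transpose,
      ← Matrix.conjTranspose_eq_transpose_of_trivial, hA.eq]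
  set v : EuclideanSpace ℝ (Fin d) := WithLp.toLp 2 (A.mulVec u) with hv
  have hBiv : ∀ i, ⟪hA.eigenvectorBasis i, v⟫ = hA.eigenvalues i * hA.eigenvectorBasis.repr u i := by
    intro i
    have h1 : ⟪hA.eigenvectorBasis i, v⟫
        = (WithLp.equiv 2 (Fin d → ℝ)) (hA.eigenvectorBasis i)
          ⬝ᵥ (A *ᵥ (WithLp.equiv 2 (Fin d → ℝ)) u) := by rw [EuclideanSpace.inner_eq_star_dotProduct, dotProduct_comm, star_trivial]; rfl
    have h2 : (WithLp.equiv 2 (Fin d → ℝ)) (hA.eigenvectorBasis i)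
          ⬝ᵥ (WithLp.equiv 2 (Fin d → ℝ)) u = ⟪hA.eigenvectorBasis i, u⟫ := by rw [EuclideanSpace.inner_eq_star_dotProduct, dotProduct_comm, star_trivial]; rfl
    rw [h1, hsym]; simp only [WithLp.equiv_apply] at h2 ⊢; rw [hA.mulVec_eigenvectorBasis, smul_dotProduct, smul_eq_mul, h2,
      hA.eigenvectorBasis.repr_apply_apply]
  have hWinner : ∀ i, ⟪w, hA.eigenvectorBasis i⟫ = hA.eigenvectorBasis.repr w i := by
    intro i
    rw [real_inner_comm, hA.eigenvectorBasis.repr_apply_apply]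
  have hdot : (w : Fin d → ℝ) ⬝ᵥ A.mulVec u
      = ∑ i, hA.eigenvalues i * (hA.eigenvectorBasis.repr w i * hA.eigenvectorBasis.repr u i) := by
    have h0 : (w : Fin d → ℝ) ⬝ᵥ A.mulVec u = ⟪w, v⟫ := by rw [EuclideanSpace.inner_eq_star_dotProduct, dotProduct_comm, star_trivial]
    rw [h0, ← hA.eigenvectorBasis.sum_inner_mul_inner w v]
    refine Finset.sum_congr rfl fun i _ => ?_
    rw [hWinner i, hBiv i]; ring
  have hinner : ∑ i, hA.eigenvectorBasis.repr w i * hA.eigenvectorBasis.repr u i = 0 := by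
    rw [← horth, ← hA.eigenvectorBasis.sum_inner_mul_inner w u]
    refine Finset.sum_congr rfl fun i _ => ?_
    simp [hA.eigenvectorBasis.repr_apply_apply, mul_comm, real_inner_comm]
  have hnormw : ‖w‖ = Real.sqrt (∑ i, hA.eigenvectorBasis.repr w i ^ 2) := by
    rw [← hA.eigenvectorBasis.repr.norm_map w, EuclideanSpace.norm_eq]
    simp [Real.norm_eq_abs, sq_abs]
  have hnormu : ‖u‖ = Real.sqrt (∑ i, hA.eigenvectorBasis.repr u i ^ 2) := by
    rw [← hA.eigenvectorBasis.repr.norm_map u, EuclideanSpace.norm_eq]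
    simp [Real.norm_eq_abs, sq_abs]
  have hi0 : (⟨0, by omega⟩ : Fin d) ∈ Finset.univ := Finset.mem_univ _
  rw [hdot, hnormw, hnormu]
  exact key_ineq hA.eigenvalues (fun i => hA.eigenvectorBasis.repr w i)
    (fun i => hA.eigenvectorBasis.repr u i) _ _
    (le_trans (Finset.inf'_le _ hi0) (Finset.le_sup' _ hi0))
    (fun i => Finset.inf'_le _ (Finset.mem_univ i))
    (fun i => Finset.le_sup' _ (Finset.mem_univ i)) hinner
end

section
/- Consider the gradient flow of the deep linear network loss with w_y(0) ≠ 0, and suppose on [0,T]: w_x(t)ᵀG(w_x(t)) ≥ 0 (equivalently, the trajectory stays on the side U⁺ and never meets the ellipsoid E). Then ‖w_y(T)‖² − ‖w_y(0)‖² ≤ ((L−1)‖w_y(0)‖²/(L‖w_x(0)‖² + ‖w_y(0)‖²))·(‖w_x(T)‖² − ‖w_x(0)‖²) ≤ 0. -/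
open scoped Matrix
open scoped RealInnerProductSpace

/-- Regularization effect of depth: along the gradient flow of a deep linear
network, if `w_y(0) ≠ 0` and `w_xᵀG(w_x) ≥ 0` on `[0,T]` (trajectory on the `U⁺`
side, never meeting the ellipsoid `E`), then
`‖w_y(T)‖² − ‖w_y(0)‖² ≤ ((L−1)‖w_y(0)‖²/(L‖w_x(0)‖² + ‖w_y(0)‖²))·(‖w_x(T)‖² − ‖w_x(0)‖²) ≤ 0`. -/
theorem stmt12 {dx dy L : ℕ} (hL : 2 ≤ L)
    (A : Matrix (Fin dx) (Fin dx) ℝ) (hA : A.PosDef)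
    (gx : EuclideanSpace ℝ (Fin dx))
    (G : EuclideanSpace ℝ (Fin dx) → EuclideanSpace ℝ (Fin dx))
    (hG : ∀ v, G v = (EuclideanSpace.equiv (Fin dx) ℝ).symm
        (A.mulVec (EuclideanSpace.equiv (Fin dx) ℝ v)) - gx)
    (wx : ℝ → EuclideanSpace ℝ (Fin dx)) (wy : ℝ → EuclideanSpace ℝ (Fin dy))
    (nw : ℝ → ℝ) (hnw : ∀ t, nw t = Real.sqrt (‖wx t‖ ^ 2 + ‖wy t‖ ^ 2))
    (T : ℝ) (hT : 0 ≤ T)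
    (hne : ∀ t ∈ Set.Icc (0 : ℝ) T, nw t ≠ 0)
    (hwy : ∀ t ∈ Set.Icc (0 : ℝ) T, wy t ≠ 0)
    (hx : ∀ t ∈ Set.Icc (0 : ℝ) T, HasDerivAt wx (-((nw t) ^ (-(2 : ℝ) / L)) •
        ((nw t) ^ 2 • G (wx t) + ((L : ℝ) - 1) • (⟪wx t, G (wx t)⟫ • wx t))) t)
    (hy : ∀ t ∈ Set.Icc (0 : ℝ) T, HasDerivAt wy
        ((-(((L : ℝ) - 1) * (nw t) ^ (-(2 : ℝ) / L) * ⟪wx t, G (wx t)⟫)) • wy t) t)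
    (hside : ∀ t ∈ Set.Icc (0 : ℝ) T, 0 ≤ ⟪wx t, G (wx t)⟫) :
    ‖wy T‖ ^ 2 - ‖wy 0‖ ^ 2
      ≤ (((L : ℝ) - 1) * ‖wy 0‖ ^ 2 / ((L : ℝ) * ‖wx 0‖ ^ 2 + ‖wy 0‖ ^ 2)) *
          (‖wx T‖ ^ 2 - ‖wx 0‖ ^ 2)
    ∧ (((L : ℝ) - 1) * ‖wy 0‖ ^ 2 / ((L : ℝ) * ‖wx 0‖ ^ 2 + ‖wy 0‖ ^ 2)) *
          (‖wx T‖ ^ 2 - ‖wx 0‖ ^ 2) ≤ 0 := by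
  have h0T : (0 : ℝ) ∈ Set.Icc (0 : ℝ) T := ⟨le_refl 0, hT⟩
  have hTT : T ∈ Set.Icc (0 : ℝ) T := ⟨hT, le_refl T⟩
  set u : ℝ → ℝ := fun t => ‖wx t‖ ^ 2 with hu
  set v : ℝ → ℝ := fun t => ‖wy t‖ ^ 2 with hv
  set s : ℝ → ℝ := fun t => ⟪wx t, G (wx t)⟫ with hs
  set k : ℝ → ℝ := fun t => 2 * (nw t) ^ (-(2 : ℝ) / L) * s t with hk
  have hL1 : (1 : ℝ) ≤ (L : ℝ) := by exact_mod_cast Nat.one_le_of_lt hL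
  have hu_nonneg : ∀ t, 0 ≤ u t := fun t => by simp only [hu]; positivity
  have hv_pos : ∀ t ∈ Set.Icc (0 : ℝ) T, 0 < v t := fun t ht => by
    have h1 : 0 < ‖wy t‖ := norm_pos_iff.mpr (hwy t ht)
    simp only [hv]; positivity
  have hn2 : ∀ t, nw t ^ 2 = ‖wx t‖ ^ 2 + ‖wy t‖ ^ 2 := fun t => by
    rw [hnw t]; exact Real.sq_sqrt (by positivity)
  have hk_nonneg : ∀ t ∈ Set.Icc (0 : ℝ) T, 0 ≤ k t := fun t ht => by
    have h1 : (0 : ℝ) ≤ (nw t) ^ (-(2 : ℝ) / L) :=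
      Real.rpow_nonneg (by rw [hnw t]; exact Real.sqrt_nonneg _) _
    have h2 := hside t ht
    simp only [hk, hs]
    positivity
  -- derivative of u
  have hdu : ∀ t ∈ Set.Icc (0 : ℝ) T,
      HasDerivAt u (-(k t) * ((L : ℝ) * u t + v t)) t := by
    intro t ht
    have h1 := (hx t ht).inner ℝ (hx t ht)
    have hueq : u = fun t => ⟪wx t, wx t⟫ := by
      funext t; exact (real_inner_self_eq_norm_sq _).symm
    rw [hueq]
    convert h1 using 1
    · rfl
    · rfl
    simp only [real_inner_smul_left, real_inner_smul_right, inner_add_left, inner_add_right,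
      real_inner_self_eq_norm_sq, real_inner_comm (G (wx t)) (wx t),
      hu, hv, hs, hk, hn2 t]
    ring
  -- derivative of v
  have hdv : ∀ t ∈ Set.Icc (0 : ℝ) T,
      HasDerivAt v (-(((L : ℝ) - 1) * k t) * v t) t := by
    intro t ht
    have h1 := (hy t ht).inner ℝ (hy t ht)
    have hveq : v = fun t => ⟪wy t, wy t⟫ := by
      funext t; exact (real_inner_self_eq_norm_sq _).symm
    rw [hveq]
    convert h1 using 1
    · rfl
    · rfl
    simp only [real_inner_smul_left, real_inner_smul_right, real_inner_self_eq_norm_sq,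
      hu, hv, hs, hk]
    ring
  -- q = u / v
  set q : ℝ → ℝ := fun t => u t / v t with hq
  have hdq : ∀ t ∈ Set.Icc (0 : ℝ) T,
      HasDerivAt q (-(k t) * (u t + v t) / v t) t := by
    intro t ht
    have h := (hdu t ht).div (hdv t ht) (ne_of_gt (hv_pos t ht))
    convert h using 1
    · rfl
    · rfl
    · rfl
    have hny : ‖wy t‖ ≠ 0 := norm_ne_zero_iff.mpr (hwy t ht)
    simp only [hu, hv, hs, hk]
    field_simp
    ring
  have hq_anti : AntitoneOn q (Set.Icc 0 T) := by
    apply antitoneOn_of_deriv_nonpos (convex_Icc 0 T)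
    · exact fun t ht => (hdq t ht).continuousAt.continuousWithinAt
    · intro t ht
      rw [interior_Icc] at ht
      exact ((hdq t (Set.Ioo_subset_Icc_self ht)).differentiableAt).differentiableWithinAt
    · intro t ht
      rw [interior_Icc] at ht
      have ht' := Set.Ioo_subset_Icc_self ht
      rw [(hdq t ht').deriv]
      apply div_nonpos_of_nonpos_of_nonneg _ (hv_pos t ht').le
      have h0 := hk_nonneg t ht'
      have h2 := hu_nonneg t
      have h3 := (hv_pos t ht').le
      nlinarith [mul_nonneg h0 h2, mul_nonneg h0 h3]
  -- u antitone
  have hu_anti : AntitoneOn u (Set.Icc 0 T) := by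
    apply antitoneOn_of_deriv_nonpos (convex_Icc 0 T)
    · exact fun t ht => (hdu t ht).continuousAt.continuousWithinAt
    · intro t ht
      rw [interior_Icc] at ht
      exact ((hdu t (Set.Ioo_subset_Icc_self ht)).differentiableAt).differentiableWithinAt
    · intro t ht
      rw [interior_Icc] at ht
      have ht' := Set.Ioo_subset_Icc_self ht
      rw [(hdu t ht').deriv]
      have h0 := hk_nonneg t ht'
      have h2 := hu_nonneg t
      have h3 := (hv_pos t ht').le
      nlinarith [mul_nonneg h0 h2, mul_nonneg h0 h3,
        mul_nonneg (mul_nonneg (le_trans zero_le_one hL1) h0) h2]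
  -- the constant c
  set c : ℝ := ((L : ℝ) - 1) * v 0 / ((L : ℝ) * u 0 + v 0) with hc
  have hd0_pos : 0 < (L : ℝ) * u 0 + v 0 := by
    have h1 := hv_pos 0 h0T
    have h2 := hu_nonneg 0
    nlinarith
  have hc_nonneg : 0 ≤ c := by
    apply div_nonneg _ hd0_pos.le
    have := (hv_pos 0 h0T).le
    nlinarith
  have hcross : ∀ t ∈ Set.Icc (0 : ℝ) T, u t * v 0 ≤ u 0 * v t := by
    intro t ht
    have hqle := hq_anti h0T ht ht.1
    rw [hq, div_le_div_iff₀ (hv_pos t ht) (hv_pos 0 h0T)] at hqle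
    linarith
  have hcb : ∀ t ∈ Set.Icc (0 : ℝ) T,
      c * ((L : ℝ) * u t + v t) ≤ ((L : ℝ) - 1) * v t := by
    intro t ht
    rw [hc, div_mul_eq_mul_div, div_le_iff₀ hd0_pos]
    have h1 := hcross t ht
    have h2 := (hv_pos t ht).le
    have h3 := hu_nonneg t
    have h4 := (hv_pos 0 h0T).le
    nlinarith [mul_le_mul_of_nonneg_left h1
      (mul_nonneg (by linarith : (0:ℝ) ≤ (L:ℝ) - 1) (by positivity : (0:ℝ) ≤ (L:ℝ)))]
  -- F = v - c * u
  set F : ℝ → ℝ := fun t => v t - c * u t with hF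
  have hdF : ∀ t ∈ Set.Icc (0 : ℝ) T,
      HasDerivAt F (k t * (c * ((L : ℝ) * u t + v t) - ((L : ℝ) - 1) * v t)) t := by
    intro t ht
    have h := (hdv t ht).sub ((hdu t ht).const_mul c)
    convert h using 1
    · rfl
    · rfl
    · rfl
    ring
  have hF_anti : AntitoneOn F (Set.Icc 0 T) := by
    apply antitoneOn_of_deriv_nonpos (convex_Icc 0 T)
    · exact fun t ht => (hdF t ht).continuousAt.continuousWithinAt
    · intro t ht
      rw [interior_Icc] at ht
      exact ((hdF t (Set.Ioo_subset_Icc_self ht)).differentiableAt).differentiableWithinAt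
    · intro t ht
      rw [interior_Icc] at ht
      have ht' := Set.Ioo_subset_Icc_self ht
      rw [(hdF t ht').deriv]
      exact mul_nonpos_of_nonneg_of_nonpos (hk_nonneg t ht')
        (by have := hcb t ht'; linarith)
  have hFT := hF_anti h0T hTT hT
  have huT := hu_anti h0T hTT hT
  constructor
  · have h1 : v T - c * u T ≤ v 0 - c * u 0 := hFT
    simp only [hc, hu, hv] at h1 ⊢
    linarith
  · refine mul_nonpos_of_nonneg_of_nonpos ?_ ?_
    · have := hc_nonneg
      simp only [hc, hu, hv] at this ⊢
      exact this
    · simp only [hu] at huT ⊢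
      linarith
end

section
/- In the same setting, if instead w_x(t)ᵀG(w_x(t)) ≤ 0 on [0,T] (the trajectory stays inside the region E⁻), then ‖w_y(T)‖² − ‖w_y(0)‖² ≥ ((L−1)‖w_y(T)‖²/(L‖w_x(T)‖² + ‖w_y(T)‖²))·(‖w_x(T)‖² − ‖w_x(0)‖²) ≥ 0. -/
open scoped Matrix
open scoped RealInnerProductSpace

/-- Regularization effect of depth: along the gradient flow of a deep linear
network, if `w_y(0) ≠ 0` and `w_xᵀG(w_x) ≤ 0` on `[0,T]` (trajectory inside `E⁻`), then
`‖w_y(T)‖² − ‖w_y(0)‖² ≥ ((L−1)‖w_y(T)‖²/(L‖w_x(T)‖² + ‖w_y(T)‖²))·(‖w_x(T)‖² − ‖w_x(0)‖²) ≥ 0`. -/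
theorem stmt13 {dx dy L : ℕ} (hL : 2 ≤ L)
    (A : Matrix (Fin dx) (Fin dx) ℝ) (hA : A.PosDef)
    (gx : EuclideanSpace ℝ (Fin dx))
    (G : EuclideanSpace ℝ (Fin dx) → EuclideanSpace ℝ (Fin dx))
    (hG : ∀ v, G v = (EuclideanSpace.equiv (Fin dx) ℝ).symm
        (A.mulVec (EuclideanSpace.equiv (Fin dx) ℝ v)) - gx)
    (wx : ℝ → EuclideanSpace ℝ (Fin dx)) (wy : ℝ → EuclideanSpace ℝ (Fin dy))
    (nw : ℝ → ℝ) (hnw : ∀ t, nw t = Real.sqrt (‖wx t‖ ^ 2 + ‖wy t‖ ^ 2))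
    (T : ℝ) (hT : 0 ≤ T)
    (hne : ∀ t ∈ Set.Icc (0 : ℝ) T, nw t ≠ 0)
    (hwy : ∀ t ∈ Set.Icc (0 : ℝ) T, wy t ≠ 0)
    (hx : ∀ t ∈ Set.Icc (0 : ℝ) T, HasDerivAt wx (-((nw t) ^ (-(2 : ℝ) / L)) •
        ((nw t) ^ 2 • G (wx t) + ((L : ℝ) - 1) • (⟪wx t, G (wx t)⟫ • wx t))) t)
    (hy : ∀ t ∈ Set.Icc (0 : ℝ) T, HasDerivAt wy
        ((-(((L : ℝ) - 1) * (nw t) ^ (-(2 : ℝ) / L) * ⟪wx t, G (wx t)⟫)) • wy t) t)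
    (hside : ∀ t ∈ Set.Icc (0 : ℝ) T, ⟪wx t, G (wx t)⟫ ≤ 0) :
    (((L : ℝ) - 1) * ‖wy T‖ ^ 2 / ((L : ℝ) * ‖wx T‖ ^ 2 + ‖wy T‖ ^ 2)) *
          (‖wx T‖ ^ 2 - ‖wx 0‖ ^ 2)
      ≤ ‖wy T‖ ^ 2 - ‖wy 0‖ ^ 2
    ∧ 0 ≤ (((L : ℝ) - 1) * ‖wy T‖ ^ 2 / ((L : ℝ) * ‖wx T‖ ^ 2 + ‖wy T‖ ^ 2)) *
          (‖wx T‖ ^ 2 - ‖wx 0‖ ^ 2) := by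
  have hL1 : (1 : ℝ) ≤ (L : ℝ) - 1 := by
    have : (2 : ℝ) ≤ (L : ℝ) := by exact_mod_cast hL
    linarith
  have hnw_sq : ∀ t, nw t ^ 2 = ‖wx t‖ ^ 2 + ‖wy t‖ ^ 2 := by
    intro t
    rw [hnw t]
    exact Real.sq_sqrt (by positivity)
  -- abbreviations (kept unfolded in computations)
  set a : ℝ → ℝ := fun t => ‖wx t‖ ^ 2 with ha_def
  set b : ℝ → ℝ := fun t => ‖wy t‖ ^ 2 with hb_def
  set g : ℝ → ℝ := fun t => ⟪wx t, G (wx t)⟫ with hg_def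
  set μ : ℝ → ℝ := fun t => 2 * (nw t ^ (-(2 : ℝ) / L)) * (-(g t)) with hμ_def
  have ha_nonneg : ∀ t, 0 ≤ a t := fun t => by simp only [ha_def]; positivity
  have hb_pos : ∀ t ∈ Set.Icc (0 : ℝ) T, 0 < b t := by
    intro t ht
    have h : (0:ℝ) < ‖wy t‖ := norm_pos_iff.mpr (hwy t ht)
    simp only [hb_def]; positivity
  have hμ_nonneg : ∀ t ∈ Set.Icc (0 : ℝ) T, 0 ≤ μ t := by
    intro t ht
    have h1 : 0 ≤ nw t ^ (-(2 : ℝ) / L) := by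
      rw [hnw t]; exact Real.rpow_nonneg (Real.sqrt_nonneg _) _
    have h2 : 0 ≤ -(g t) := by
      simp only [hg_def]
      simpa using neg_nonneg.mpr (hside t ht)
    simp only [hμ_def]
    positivity
  -- derivatives of a and b
  have hda : ∀ t ∈ Set.Icc (0 : ℝ) T, HasDerivAt a (μ t * ((L : ℝ) * a t + b t)) t := by
    intro t ht
    have h1 := hx t ht
    have h2 := HasDerivAt.inner (𝕜 := ℝ) h1 h1
    have h3 : a = fun s => ⟪wx s, wx s⟫ := by
      funext s; exact (real_inner_self_eq_norm_sq (wx s)).symm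
    rw [h3]
    convert h2 using 1
    rotate_right
    simp only [hμ_def, hg_def, ha_def, hb_def]
    have e1 : ⟪(-((nw t) ^ (-(2 : ℝ) / L)) •
        ((nw t) ^ 2 • G (wx t) + ((L : ℝ) - 1) • (⟪wx t, G (wx t)⟫ • wx t)) :
          EuclideanSpace ℝ (Fin dx)), wx t⟫
        = -((nw t) ^ (-(2 : ℝ) / L)) * ((nw t) ^ 2 * ⟪wx t, G (wx t)⟫ +
            ((L : ℝ) - 1) * (⟪wx t, G (wx t)⟫ * ‖wx t‖ ^ 2)) := by
      rw [real_inner_smul_left, inner_add_left, real_inner_smul_left, real_inner_smul_left,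
        real_inner_smul_left, real_inner_comm (G (wx t)) (wx t), real_inner_self_eq_norm_sq]
    have e2 : ⟪wx t, (-((nw t) ^ (-(2 : ℝ) / L)) •
        ((nw t) ^ 2 • G (wx t) + ((L : ℝ) - 1) • (⟪wx t, G (wx t)⟫ • wx t)) :
          EuclideanSpace ℝ (Fin dx))⟫
        = -((nw t) ^ (-(2 : ℝ) / L)) * ((nw t) ^ 2 * ⟪wx t, G (wx t)⟫ +
            ((L : ℝ) - 1) * (⟪wx t, G (wx t)⟫ * ‖wx t‖ ^ 2)) := by
      rw [real_inner_smul_right, inner_add_right, real_inner_smul_right, real_inner_smul_right,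
        real_inner_smul_right, real_inner_self_eq_norm_sq]
    rw [e1, e2, real_inner_self_eq_norm_sq, hnw_sq t]
    ring
    all_goals rfl
  have hdb : ∀ t ∈ Set.Icc (0 : ℝ) T, HasDerivAt b (μ t * (((L : ℝ) - 1) * b t)) t := by
    intro t ht
    have h1 := hy t ht
    have h2 := HasDerivAt.inner (𝕜 := ℝ) h1 h1
    have h3 : b = fun s => ⟪wy s, wy s⟫ := by
      funext s; exact (real_inner_self_eq_norm_sq (wy s)).symm
    rw [h3]
    convert h2 using 1
    rotate_right
    simp only [hμ_def, hg_def, hb_def]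
    rw [real_inner_smul_right, real_inner_smul_left, real_inner_self_eq_norm_sq]
    ring
    all_goals rfl
  -- generic monotonicity helper
  have mono : ∀ (f f' : ℝ → ℝ), (∀ t ∈ Set.Icc (0 : ℝ) T, HasDerivAt f (f' t) t) →
      (∀ t ∈ Set.Icc (0 : ℝ) T, 0 ≤ f' t) → MonotoneOn f (Set.Icc 0 T) := by
    intro f f' hd hpos
    apply monotoneOn_of_deriv_nonneg (convex_Icc 0 T)
    · intro t ht; exact (hd t ht).continuousAt.continuousWithinAt
    · intro t ht
      rw [interior_Icc] at ht
      exact (hd t (Set.Ioo_subset_Icc_self ht)).differentiableAt.differentiableWithinAt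
    · intro t ht
      rw [interior_Icc] at ht
      rw [(hd t (Set.Ioo_subset_Icc_self ht)).deriv]
      exact hpos t (Set.Ioo_subset_Icc_self ht)
  have hT0 : (0:ℝ) ∈ Set.Icc (0:ℝ) T := Set.mem_Icc.mpr ⟨le_refl 0, hT⟩
  have hTT : T ∈ Set.Icc (0:ℝ) T := Set.mem_Icc.mpr ⟨hT, le_refl T⟩
  -- a is monotone
  have hamono : MonotoneOn a (Set.Icc 0 T) := by
    apply mono a (fun t => μ t * ((L : ℝ) * a t + b t)) hda
    intro t ht
    have h1 := hb_pos t ht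
    have h2 := ha_nonneg t
    have h3 := hμ_nonneg t ht
    have h4 : (0:ℝ) ≤ (L:ℝ) * a t := mul_nonneg (Nat.cast_nonneg L) h2
    exact mul_nonneg h3 (by linarith)
  have haT : a 0 ≤ a T := hamono hT0 hTT hT
  -- the ratio a/b is monotone
  have hqmono : MonotoneOn (fun t => a t / b t) (Set.Icc 0 T) := by
    apply mono _ (fun t => (μ t * ((L : ℝ) * a t + b t) * b t -
        a t * (μ t * (((L : ℝ) - 1) * b t))) / (b t) ^ 2)
    · intro t ht
      exact (hda t ht).div (hdb t ht) (ne_of_gt (hb_pos t ht))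
    · intro t ht
      have hb := hb_pos t ht
      have hμ := hμ_nonneg t ht
      have ha := ha_nonneg t
      apply div_nonneg _ (by positivity)
      have heq : μ t * ((L : ℝ) * a t + b t) * b t - a t * (μ t * (((L : ℝ) - 1) * b t))
          = μ t * b t * (a t + b t) := by ring
      rw [heq]
      positivity
  have hqt : ∀ t ∈ Set.Icc (0:ℝ) T, a t * b T ≤ a T * b t := by
    intro t ht
    have h := hqmono ht hTT (Set.mem_Icc.mp ht).2
    exact (div_le_div_iff₀ (hb_pos t ht) (hb_pos T hTT)).mp h
  -- the key comparison function
  set c : ℝ := ((L : ℝ) - 1) * b T / ((L : ℝ) * a T + b T) with hc_def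
  have hD_pos : 0 < (L : ℝ) * a T + b T := by
    have h1 := hb_pos T hTT
    have h2 := ha_nonneg T
    nlinarith
  have hc_nonneg : 0 ≤ c := by
    have h1 := hb_pos T hTT
    rw [hc_def]
    apply div_nonneg _ (le_of_lt hD_pos)
    nlinarith
  have hψmono : MonotoneOn (fun t => b t - c * a t) (Set.Icc 0 T) := by
    apply mono _ (fun t => μ t * (((L : ℝ) - 1) * b t) - c * (μ t * ((L : ℝ) * a t + b t)))
    · intro t ht
      exact (hdb t ht).sub ((hda t ht).const_mul c)
    · intro t ht
      have hμ := hμ_nonneg t ht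
      have key : c * ((L : ℝ) * a t + b t) ≤ ((L : ℝ) - 1) * b t := by
        rw [hc_def, div_mul_eq_mul_div, div_le_iff₀ hD_pos]
        have h1 := hqt t ht
        have h2 : ((L : ℝ) - 1) * (L : ℝ) * (a t * b T) ≤ ((L : ℝ) - 1) * (L : ℝ) * (a T * b t) :=
          mul_le_mul_of_nonneg_left h1 (by nlinarith)
        nlinarith
      nlinarith [mul_le_mul_of_nonneg_left key hμ]
  have hψ : b 0 - c * a 0 ≤ b T - c * a T := hψmono hT0 hTT hT
  have h1 : c * (a T - a 0) ≤ b T - b 0 := by nlinarith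
  have h2 : 0 ≤ c * (a T - a 0) := mul_nonneg hc_nonneg (by linarith)
  constructor
  · have goal1 : c * (‖wx T‖ ^ 2 - ‖wx 0‖ ^ 2) ≤ ‖wy T‖ ^ 2 - ‖wy 0‖ ^ 2 := h1
    simpa [hc_def, ha_def, hb_def] using goal1
  · have goal2 : 0 ≤ c * (‖wx T‖ ^ 2 - ‖wx 0‖ ^ 2) := h2
    simpa [hc_def, ha_def, hb_def] using goal2
end

section
/- Let A be symmetric with eigenvalues in [c−ε, c+ε], 0 ≤ ε ≤ c/2. If w satisfies wᵀA(w−w*) = 0 and ‖w − w*‖ ≥ (2√3/c)‖w*‖ε, then ‖A(w−w*)‖² + wᵀA²(w−w*) ≥ 0. -/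
open scoped Matrix
open scoped RealInnerProductSpace

lemma polar_bound {E : Type*} [NormedAddCommGroup E] [InnerProductSpace ℝ E]
    (S : E → E → ℝ) (hsym : ∀ x z, S x z = S z x)
    (hadd : ∀ x y z, S (x + y) z = S x z + S y z)
    (hsmul : ∀ (t : ℝ) x z, S (t • x) z = t * S x z)
    (ε : ℝ) (hbound : ∀ x, |S x x| ≤ ε * ‖x‖ ^ 2) :
    ∀ x z, |S x z| ≤ ε * ‖x‖ * ‖z‖ := by
  have hzero : ∀ z, S 0 z = 0 := by
    intro z
    have := hsmul 0 0 z
    simpa using this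
  have hsmul2 : ∀ (t : ℝ) x z, S x (t • z) = t * S x z := by
    intro t x z; rw [hsym, hsmul, hsym]
  have expand : ∀ x z, S (x + z) (x + z) = S x x + 2 * S x z + S z z := by
    intro x z
    rw [hadd, hsym x (x + z), hadd, hsym z (x + z), hadd, hsym z x]
    ring
  have expand' : ∀ x z, S (x - z) (x - z) = S x x - 2 * S x z + S z z := by
    intro x z
    have h1 : x - z = x + (-1 : ℝ) • z := by
      simp [sub_eq_add_neg]
    rw [h1, expand, hsmul2, hsmul, hsmul2]
    ring
  have half : ∀ x z, |S x z| ≤ ε * (‖x‖ ^ 2 + ‖z‖ ^ 2) / 2 := by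
    intro x z
    have h1 := hbound (x + z)
    have h2 := hbound (x - z)
    have e1 := expand x z
    have e2 := expand' x z
    have n1 : ‖x + z‖ ^ 2 = ‖x‖ ^ 2 + 2 * ⟪x, z⟫ + ‖z‖ ^ 2 := norm_add_sq_real x z
    have n2 : ‖x - z‖ ^ 2 = ‖x‖ ^ 2 - 2 * ⟪x, z⟫ + ‖z‖ ^ 2 := norm_sub_sq_real x z
    rw [e1, n1] at h1
    rw [e2, n2] at h2
    rw [abs_le] at h1 h2 ⊢
    constructor <;> nlinarith [h1.1, h1.2, h2.1, h2.2]
  intro x z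
  by_cases hx : x = 0
  · simp [hx, hzero]
  by_cases hz : z = 0
  · subst hz
    rw [hsym, hzero]
    simp
  have hxn : (0:ℝ) < ‖x‖ := norm_pos_iff.mpr hx
  have hzn : (0:ℝ) < ‖z‖ := norm_pos_iff.mpr hz
  set t : ℝ := Real.sqrt (‖z‖ / ‖x‖) with ht
  have htpos : 0 < t := Real.sqrt_pos.mpr (by positivity)
  have ht2 : t ^ 2 = ‖z‖ / ‖x‖ := Real.sq_sqrt (by positivity)
  have h := half (t • x) (t⁻¹ • z)
  rw [hsmul, hsmul2] at h
  have hS : t * (t⁻¹ * S x z) = S x z := by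
    field_simp
  rw [hS] at h
  have hn1 : ‖t • x‖ ^ 2 = ‖z‖ * ‖x‖ := by
    rw [norm_smul]
    rw [Real.norm_eq_abs, abs_of_pos htpos, mul_pow, ht2]
    field_simp
  have hn2 : ‖t⁻¹ • z‖ ^ 2 = ‖x‖ * ‖z‖ := by
    rw [norm_smul, Real.norm_eq_abs, abs_of_pos (by positivity : (0:ℝ) < t⁻¹), mul_pow,
      inv_pow, ht2]
    field_simp
  rw [hn1, hn2] at h
  calc |S x z| ≤ ε * (‖z‖ * ‖x‖ + ‖x‖ * ‖z‖) / 2 := h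
    _ = ε * ‖x‖ * ‖z‖ := by ring

set_option maxHeartbeats 1000000 in
/-- If `A` is symmetric with spectrum in `[c−ε, c+ε]` (expressed via the
quadratic-form bounds), `0 < c`, `0 ≤ ε ≤ c/2`, `w` lies on the ellipsoid
`wᵀA(w − w*) = 0`, and `‖w − w*‖ ≥ (2√3/c)‖w*‖ε`, then
`‖A(w − w*)‖² + wᵀA²(w − w*) ≥ 0`. -/
theorem stmt15 {d : ℕ} (A : Matrix (Fin d) (Fin d) ℝ) (hsymm : A.IsSymm)
    (c ε : ℝ) (hc : 0 < c) (hε : 0 ≤ ε) (hεc : ε ≤ c / 2)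
    (hlow : ∀ u : EuclideanSpace ℝ (Fin d),
      (c - ε) * ‖u‖ ^ 2 ≤ (EuclideanSpace.equiv (Fin d) ℝ u) ⬝ᵥ
        A.mulVec (EuclideanSpace.equiv (Fin d) ℝ u))
    (hup : ∀ u : EuclideanSpace ℝ (Fin d),
      (EuclideanSpace.equiv (Fin d) ℝ u) ⬝ᵥ
        A.mulVec (EuclideanSpace.equiv (Fin d) ℝ u) ≤ (c + ε) * ‖u‖ ^ 2)
    (w wstar : EuclideanSpace ℝ (Fin d))
    (hconstraint : (EuclideanSpace.equiv (Fin d) ℝ w) ⬝ᵥ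
        A.mulVec (EuclideanSpace.equiv (Fin d) ℝ (w - wstar)) = 0)
    (hfar : (2 * Real.sqrt 3 / c) * ‖wstar‖ * ε ≤ ‖w - wstar‖) :
    0 ≤ ‖(EuclideanSpace.equiv (Fin d) ℝ).symm
          (A.mulVec (EuclideanSpace.equiv (Fin d) ℝ (w - wstar)))‖ ^ 2
        + (EuclideanSpace.equiv (Fin d) ℝ w) ⬝ᵥ
            A.mulVec (A.mulVec (EuclideanSpace.equiv (Fin d) ℝ (w - wstar))) := by
  set T := Matrix.toEuclideanLin A with hT
  have hTdot : ∀ u v : EuclideanSpace ℝ (Fin d),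
      (EuclideanSpace.equiv (Fin d) ℝ u) ⬝ᵥ A.mulVec (EuclideanSpace.equiv (Fin d) ℝ v)
        = ⟪u, T v⟫ := by
    intro u v
    simp [hT, Matrix.toEuclideanLin_apply, PiLp.inner_apply, dotProduct]
    exact Finset.sum_congr rfl fun x _ => mul_comm _ _
  have hdotsym : ∀ u v : Fin d → ℝ, u ⬝ᵥ A.mulVec v = v ⬝ᵥ A.mulVec u := by
    intro u v
    nth_rewrite 1 [← hsymm]
    rw [Matrix.dotProduct_mulVec, Matrix.vecMul_transpose, dotProduct_comm]
  have hTsym : ∀ x y : EuclideanSpace ℝ (Fin d), ⟪x, T y⟫ = ⟪y, T x⟫ := by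
    intro x y
    rw [← hTdot, ← hTdot]
    exact hdotsym _ _
  have hlow' : ∀ u : EuclideanSpace ℝ (Fin d), (c - ε) * ‖u‖ ^ 2 ≤ ⟪u, T u⟫ := by
    intro u; rw [← hTdot]; exact hlow u
  have hup' : ∀ u : EuclideanSpace ℝ (Fin d), ⟪u, T u⟫ ≤ (c + ε) * ‖u‖ ^ 2 := by
    intro u; rw [← hTdot]; exact hup u
  -- bilinear bound
  set S : EuclideanSpace ℝ (Fin d) → EuclideanSpace ℝ (Fin d) → ℝ :=
    fun x z => ⟪x, T z⟫ - c * ⟪x, z⟫ with hS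
  have hbil : ∀ x z, |S x z| ≤ ε * ‖x‖ * ‖z‖ := by
    apply polar_bound
    · intro x z
      simp only [hS]
      rw [hTsym, real_inner_comm x z]
    · intro x y z
      simp only [hS, inner_add_left]
      ring
    · intro t x z
      simp only [hS, real_inner_smul_left]
      ring
    · intro x
      have h1 := hlow' x
      have h2 := hup' x
      rw [abs_le]
      simp only [hS]
      rw [real_inner_self_eq_norm_sq]
      constructor <;> [nlinarith [h1]; nlinarith [h2]]
  set v := w - wstar with hv
  set y := T v with hy
  have hc0 : ⟪w, y⟫ = 0 := by rw [hy, ← hTdot]; exact hconstraint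
  -- ‖w‖² ≤ 3‖wstar‖²
  have hww : ∀ x : EuclideanSpace ℝ (Fin d), ⟪x, x⟫ = ‖x‖ ^ 2 :=
    fun x => real_inner_self_eq_norm_sq x
  have hab : ⟪w, T w⟫ = ⟪w, T wstar⟫ := by
    have : ⟪w, T v⟫ = ⟪w, T w⟫ - ⟪w, T wstar⟫ := by
      rw [hv, map_sub, inner_sub_right]
    rw [← hy] at this
    rw [hc0] at this
    linarith
  have hquad : ∀ t : ℝ, 0 ≤ ⟪wstar, T wstar⟫ * (t * t) + (2 * ⟪w, T wstar⟫) * t + ⟪w, T w⟫ := by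
    intro t
    have h1 := hlow' (w + t • wstar)
    have h2 : ⟪w + t • wstar, T (w + t • wstar)⟫
        = ⟪w, T w⟫ + t * ⟪w, T wstar⟫ + t * ⟪wstar, T w⟫ + t ^ 2 * ⟪wstar, T wstar⟫ := by
      rw [map_add, map_smul, inner_add_left, inner_add_right, inner_add_right,
        real_inner_smul_left, real_inner_smul_right, real_inner_smul_left, real_inner_smul_right]
      ring
    rw [h2, hTsym wstar w] at h1
    nlinarith [sq_nonneg ‖w + t • wstar‖, h1, hεc, hc]
  have hdisc := discrim_le_zero hquad
  rw [discrim] at hdisc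
  have hW : ‖w‖ ^ 2 ≤ 3 * ‖wstar‖ ^ 2 := by
    have ha := hlow' w
    have he := hup' wstar
    have hkey : ⟪w, T w⟫ ≤ (c + ε) * ‖wstar‖ ^ 2 := by
      rcases le_or_gt ⟪w, T w⟫ 0 with h | h
      · nlinarith [sq_nonneg ‖wstar‖]
      · nlinarith [hab, hdisc, he]
    nlinarith [ha, hkey, hc, hεc, hε, sq_nonneg ‖wstar‖]
  -- ‖y‖ lower bound
  have hvy : (c - ε) * ‖v‖ ≤ ‖y‖ := by
    rcases eq_or_lt_of_le (norm_nonneg v) with h0 | h0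
    · rw [← h0]
      simp [norm_nonneg]
    · have h1 := hlow' v
      rw [← hy] at h1
      have h2 : ⟪v, y⟫ ≤ ‖v‖ * ‖y‖ := real_inner_le_norm v y
      nlinarith [h1, h2, h0]
  have hsqrt3 : Real.sqrt 3 ^ 2 = 3 := Real.sq_sqrt (by norm_num)
  have hsqrt3' : 0 ≤ Real.sqrt 3 := Real.sqrt_nonneg 3
  have hylow : Real.sqrt 3 * ε * ‖wstar‖ ≤ ‖y‖ := by
    have h1 : (2 * Real.sqrt 3 / c) * ‖wstar‖ * ε ≤ ‖v‖ := hfar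
    have h2 : c / 2 ≤ c - ε := by linarith
    have h3 : c / 2 * ((2 * Real.sqrt 3 / c) * ‖wstar‖ * ε) = Real.sqrt 3 * ε * ‖wstar‖ := by
      field_simp
    calc Real.sqrt 3 * ε * ‖wstar‖ = c / 2 * ((2 * Real.sqrt 3 / c) * ‖wstar‖ * ε) := h3.symm
      _ ≤ c / 2 * ‖v‖ := mul_le_mul_of_nonneg_left h1 (by positivity)
      _ ≤ (c - ε) * ‖v‖ := mul_le_mul_of_nonneg_right h2 (norm_nonneg v)
      _ ≤ ‖y‖ := hvy
  -- conclude
  have hwb : ε * ‖w‖ ≤ ‖y‖ := by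
    have h5 : (ε * ‖w‖) ^ 2 ≤ ‖y‖ ^ 2 := by
      have : (ε * ‖w‖) ^ 2 ≤ (Real.sqrt 3 * ε * ‖wstar‖) ^ 2 := by
        nlinarith [mul_le_mul_of_nonneg_left hW (sq_nonneg ε), hsqrt3, sq_nonneg (ε * ‖wstar‖)]
      have h6 : (Real.sqrt 3 * ε * ‖wstar‖) ^ 2 ≤ ‖y‖ ^ 2 := by
        apply pow_le_pow_left₀ (by positivity) hylow
      linarith
    nlinarith [h5, norm_nonneg y, mul_nonneg hε (norm_nonneg w)]
  have hfinal := hbil w y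
  rw [abs_le] at hfinal
  have h7 : -(ε * ‖w‖ * ‖y‖) ≤ S w y := hfinal.1
  have h8 : S w y = ⟪w, T y⟫ - c * ⟪w, y⟫ := rfl
  rw [hc0] at h8
  -- rewrite the goal
  have g1 : ‖(EuclideanSpace.equiv (Fin d) ℝ).symm
      (A.mulVec (EuclideanSpace.equiv (Fin d) ℝ (w - wstar)))‖ = ‖y‖ := by
    congr 1
  have g2 : (EuclideanSpace.equiv (Fin d) ℝ w) ⬝ᵥ
      A.mulVec (A.mulVec (EuclideanSpace.equiv (Fin d) ℝ (w - wstar))) = ⟪w, T y⟫ := by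
    rw [← hTdot w y]
    congr 2
  rw [g1, g2]
  nlinarith [h7, h8, hwb, norm_nonneg y, mul_nonneg hε (norm_nonneg w)]
end
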